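/- arXiv:1510.06999 — 3 statements merged into one kernel-verified Lean document; each statement's English description precedes it below -/
import Mathlib

section
/- Let y₁, …, y_M be nonnegative real numbers with σ₁ = Σ y_k > 0, and let σ_d be the d-th elementary symmetric polynomial. Then for each 1 ≤ d ≤ M, σ_d ≥ (σ₁^d / d!) · (1 - C(d,2) · (Σ_{k=1}^M y_k²) / σ₁²), where C(d,2) is the binomial coefficient (interpreted as 0 when d = 1). -/
/-!
Write `S = ∑ yₖ`, `Q = ∑ yₖ²` and `e_d` for the `d`-th elementary symmetric function. Expanding
`S · e_d` and sorting the terms `yₖ ∏_{j ∈ s} yⱼ` by whether `k ∈ s` gives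
`S · e_d = (d + 1) e_{d+1} + ∑_{|s| = d} (∑_{k ∈ s} yₖ) ∏_{j ∈ s} yⱼ`,
and the error term at `d + 1` is at most `Q · e_d`, since each of its terms is `yₖ² ∏_{j ∈ s} yⱼ`
with `k ∉ s`, `|s| = d`. Dropping the error term gives `d! e_d ≤ S^d`; keeping its bound gives,
by induction on `d`, `S^d (S² - C(d,2) Q) ≤ S² d! e_d`.
-/

open Finset
open scoped Nat

section PowersetCard

variable {ι β : Type*} [DecidableEq ι] [AddCommMonoid β]

theorem sum_powersetCard_succ_sum_eq_sum_sdiff_insert (u : Finset ι) (g : Finset ι → ι → β)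
    (d : ℕ) :
    ∑ t ∈ powersetCard (d + 1) u, ∑ k ∈ t, g t k =
      ∑ s ∈ powersetCard d u, ∑ k ∈ u \ s, g (insert k s) k := by
  rw [sum_sigma', sum_sigma']
  refine sum_nbij' (fun p => ⟨p.1.erase p.2, p.2⟩) (fun p => ⟨insert p.2 p.1, p.2⟩)
    ?_ ?_ ?_ ?_ ?_
  · rintro ⟨t, k⟩ h
    simp only [mem_sigma, mem_powersetCard, mem_sdiff] at h ⊢
    exact ⟨⟨(erase_subset _ _).trans h.1.1, by rw [card_erase_of_mem h.2, h.1.2]; rfl⟩,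
      h.1.1 h.2, notMem_erase _ _⟩
  · rintro ⟨s, k⟩ h
    simp only [mem_sigma, mem_powersetCard, mem_sdiff] at h ⊢
    exact ⟨⟨insert_subset h.2.1 h.1.1, by rw [card_insert_of_notMem h.2.2, h.1.2]⟩,
      mem_insert_self _ _⟩
  · rintro ⟨t, k⟩ h
    simp only [mem_sigma] at h
    simp [insert_erase h.2]
  · rintro ⟨s, k⟩ h
    simp only [mem_sigma, mem_sdiff] at h
    simp [erase_insert h.2.2]
  · rintro ⟨t, k⟩ h
    simp only [mem_sigma] at h
    simp [insert_erase h.2]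

end PowersetCard

section Esymm

variable {ι R : Type*} [Fintype ι]

def esymm [CommSemiring R] (y : ι → R) (d : ℕ) : R :=
  ∑ s ∈ powersetCard d univ, ∏ k ∈ s, y k

theorem esymm_one [CommSemiring R] (y : ι → R) : esymm y 1 = ∑ k, y k := by
  simp [esymm, powersetCard_one]

theorem esymm_nonneg [CommSemiring R] [PartialOrder R] [IsOrderedRing R] {y : ι → R}
    (hy : ∀ k, 0 ≤ y k) (d : ℕ) : 0 ≤ esymm y d :=
  sum_nonneg fun _ _ => prod_nonneg fun k _ => hy k

theorem sum_mul_esymm [DecidableEq ι] [CommSemiring R] (y : ι → R) (d : ℕ) :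
    (∑ k, y k) * esymm y d =
      (d + 1) * esymm y (d + 1) + ∑ s ∈ powersetCard d univ, (∑ k ∈ s, y k) * ∏ k ∈ s, y k := by
  have hsucc : (d + 1) * esymm y (d + 1) =
      ∑ s ∈ powersetCard d univ, ∑ k ∈ univ \ s, ∏ j ∈ insert k s, y j := by
    rw [← sum_powersetCard_succ_sum_eq_sum_sdiff_insert univ (fun t _ => ∏ j ∈ t, y j), esymm,
      mul_sum]
    refine sum_congr rfl fun t ht => ?_
    rw [sum_const, mem_powersetCard_univ.mp ht, nsmul_eq_mul]
    push_cast
    ring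
  rw [hsucc, esymm, mul_sum, ← sum_add_distrib]
  refine sum_congr rfl fun s _ => ?_
  rw [← sum_sdiff (subset_univ s), add_mul, sum_mul]
  congr 1
  exact sum_congr rfl fun k hk => (prod_insert (mem_sdiff.mp hk).2).symm

theorem sum_powersetCard_succ_sum_mul_prod_le [DecidableEq ι] [CommSemiring R] [PartialOrder R]
    [IsOrderedRing R] {y : ι → R} (hy : ∀ k, 0 ≤ y k) (d : ℕ) :
    ∑ s ∈ powersetCard (d + 1) univ, (∑ k ∈ s, y k) * ∏ k ∈ s, y k ≤
      (∑ k, y k ^ 2) * esymm y d := by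
  rw [esymm, mul_sum]
  simp_rw [sum_mul]
  rw [sum_powersetCard_succ_sum_eq_sum_sdiff_insert univ (fun t k => y k * ∏ j ∈ t, y j)]
  refine sum_le_sum fun s _ => ?_
  calc ∑ k ∈ univ \ s, y k * ∏ j ∈ insert k s, y j
      = ∑ k ∈ univ \ s, y k ^ 2 * ∏ j ∈ s, y j :=
        sum_congr rfl fun k hk => by rw [prod_insert (mem_sdiff.mp hk).2, sq, mul_assoc]
    _ ≤ ∑ k, y k ^ 2 * ∏ j ∈ s, y j :=
        sum_le_sum_of_subset_of_nonneg sdiff_subset fun k _ _ =>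
          mul_nonneg (pow_nonneg (hy k) 2) (prod_nonneg fun j _ => hy j)

theorem succ_mul_esymm_succ_le [DecidableEq ι] [CommSemiring R] [PartialOrder R]
    [IsOrderedRing R] {y : ι → R} (hy : ∀ k, 0 ≤ y k) (d : ℕ) :
    (d + 1) * esymm y (d + 1) ≤ (∑ k, y k) * esymm y d := by
  rw [sum_mul_esymm]
  exact le_add_of_nonneg_right <| sum_nonneg fun s _ =>
    mul_nonneg (sum_nonneg fun k _ => hy k) (prod_nonneg fun k _ => hy k)

theorem sum_mul_esymm_succ_le [DecidableEq ι] [CommSemiring R] [PartialOrder R]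
    [IsOrderedRing R] {y : ι → R} (hy : ∀ k, 0 ≤ y k) (d : ℕ) :
    (∑ k, y k) * esymm y (d + 1) ≤ (d + 2) * esymm y (d + 2) + (∑ k, y k ^ 2) * esymm y d := by
  rw [sum_mul_esymm, Nat.cast_succ, add_assoc, one_add_one_eq_two]
  exact add_le_add_right (sum_powersetCard_succ_sum_mul_prod_le hy d) _

theorem factorial_mul_esymm_le [CommSemiring R] [PartialOrder R] [IsOrderedRing R]
    {y : ι → R} (hy : ∀ k, 0 ≤ y k) (d : ℕ) :
    d ! * esymm y d ≤ (∑ k, y k) ^ d := by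
  classical
  induction d with
  | zero => simp [esymm]
  | succ d ih =>
    calc ((d + 1) ! : R) * esymm y (d + 1) = d ! * ((d + 1) * esymm y (d + 1)) := by
          push_cast [Nat.factorial_succ]; ring
      _ ≤ d ! * ((∑ k, y k) * esymm y d) := by
          gcongr _ * ?_
          exact succ_mul_esymm_succ_le hy d
      _ = (∑ k, y k) * (d ! * esymm y d) := by ring
      _ ≤ (∑ k, y k) * (∑ k, y k) ^ d := by gcongr; exact sum_nonneg fun k _ => hy k
      _ = (∑ k, y k) ^ (d + 1) := by ring

theorem pow_mul_sub_choose_two_le [CommRing R] [PartialOrder R] [IsOrderedRing R]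
    {y : ι → R} (hy : ∀ k, 0 ≤ y k) {d : ℕ} (hd : 1 ≤ d) :
    (∑ k, y k) ^ d * ((∑ k, y k) ^ 2 - d.choose 2 * ∑ k, y k ^ 2) ≤
      (∑ k, y k) ^ 2 * (d ! * esymm y d) := by
  classical
  set S := ∑ k, y k
  set Q := ∑ k, y k ^ 2
  have hS : 0 ≤ S := sum_nonneg fun k _ => hy k
  have hQ : 0 ≤ Q := sum_nonneg fun k _ => pow_nonneg (hy k) 2
  induction d, hd using Nat.le_induction with
  | base => exact le_of_eq (by simp [esymm_one, S]; ring)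
  | succ d hd ih =>
    obtain ⟨m, rfl⟩ := Nat.exists_eq_add_of_le' hd
    have hchoose : ((m + 2).choose 2 : R) = (m + 1).choose 2 + (m + 1) := by
      push_cast [Nat.choose_succ_succ (m + 1) 1, Nat.choose_one_right]; ring
    calc S ^ (m + 2) * (S ^ 2 - (m + 2).choose 2 * Q)
        = S * (S ^ (m + 1) * (S ^ 2 - (m + 1).choose 2 * Q)) -
            S ^ 2 * ((m + 1) * Q * S ^ m) := by
          rw [hchoose]; ring
      _ ≤ S * (S ^ 2 * ((m + 1) ! * esymm y (m + 1))) -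
            S ^ 2 * ((m + 1) * Q * (m ! * esymm y m)) := by
          have := factorial_mul_esymm_le hy m
          gcongr
          exact mul_nonneg (add_nonneg m.cast_nonneg zero_le_one) hQ
      _ = S ^ 2 * ((m + 1) ! * (S * esymm y (m + 1) - Q * esymm y m)) := by
          push_cast [Nat.factorial_succ]; ring
      _ ≤ S ^ 2 * ((m + 1) ! * ((m + 2) * esymm y (m + 2))) := by
          gcongr
          exact sub_le_iff_le_add.mpr (sum_mul_esymm_succ_le hy m)
      _ = S ^ 2 * ((m + 2) ! * esymm y (m + 2)) := by
          push_cast [Nat.factorial_succ]; ring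

end Esymm

theorem esymm_lower_bound_general (M : ℕ) (y : Fin M → ℝ) (hy : ∀ k, 0 ≤ y k)
    (d : ℕ) (hd1 : 1 ≤ d) :
    ((∑ k, y k) ^ d / (Nat.factorial d)) *
      (1 - (Nat.choose d 2 : ℝ) * (∑ k, (y k) ^ 2) / (∑ k, y k) ^ 2)
      ≤ ∑ s ∈ Finset.powersetCard d (Finset.univ : Finset (Fin M)), ∏ k ∈ s, y k := by
  change _ ≤ esymm y d
  rcases (sum_nonneg fun k _ => hy k : 0 ≤ ∑ k, y k).eq_or_lt with hS | hS
  · rw [← hS, zero_pow (by omega), zero_div, zero_mul]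
    exact esymm_nonneg hy d
  · have hmain := pow_mul_sub_choose_two_le hy hd1
    set S := ∑ k, y k
    set Q := ∑ k, y k ^ 2
    calc S ^ d / d ! * (1 - d.choose 2 * Q / S ^ 2)
        = S ^ d * (S ^ 2 - d.choose 2 * Q) / (S ^ 2 * d !) := by
          field_simp
      _ ≤ esymm y d := by
          rw [div_le_iff₀ (by positivity)]
          linarith

theorem esymm_lower_bound (M : ℕ) (y : Fin M → ℝ) (hy : ∀ k, 0 ≤ y k)
    (hpos : 0 < ∑ k, y k)
    (d : ℕ) (hd1 : 1 ≤ d) (hdM : d ≤ M) :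
    ((∑ k, y k) ^ d / (Nat.factorial d)) *
      (1 - (Nat.choose d 2 : ℝ) * (∑ k, (y k) ^ 2) / (∑ k, y k) ^ 2)
      ≤ ∑ s ∈ Finset.powersetCard d (Finset.univ : Finset (Fin M)), ∏ k ∈ s, y k :=
  esymm_lower_bound_general M y hy d hd1
end

section
/- If ξ and U are real numbers with 0 < ξ ≤ U, then the tail of the exponential series satisfies Σ_{d ≥ U, d ∈ ℕ} ξ^d / d! ≤ (e·ξ/U)^U. -/
/-!
Rankin's trick: for `t ≥ 1` the indicator of `U ≤ d` is at most `t ^ (d - U)`, so the tail of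
`∑ ξ ^ d / d!` is at most `t ^ (-U) ∑ (t ξ) ^ d / d! = exp (t ξ) / t ^ U`. The choice `t = U / ξ`
gives `e ^ U (ξ / U) ^ U`.
-/

open Real Nat

lemma ite_pow_div_factorial_le {x U t : ℝ} (hx : 0 ≤ x) (ht : 1 ≤ t) (d : ℕ) :
    (if U ≤ (d : ℝ) then x ^ d / d ! else 0) ≤ (t * x) ^ d / d ! / t ^ U := by
  split_ifs with hUd
  · have htU : t ^ U ≤ t ^ d := by
      simpa only [rpow_natCast] using rpow_le_rpow_of_exponent_le ht hUd
    calc x ^ d / d ! = (t * x) ^ d / d ! / t ^ d := by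
          rw [mul_pow]; field_simp
      _ ≤ (t * x) ^ d / d ! / t ^ U := by gcongr
  · positivity

theorem tsum_ite_pow_div_factorial_le {x U t : ℝ} (hx : 0 ≤ x) (ht : 1 ≤ t) :
    ∑' d : ℕ, (if U ≤ (d : ℝ) then x ^ d / d ! else 0) ≤ exp (t * x) / t ^ U := by
  have hexp : HasSum (fun d : ℕ ↦ (t * x) ^ d / d ! / t ^ U) (exp (t * x) / t ^ U) := by
    rw [exp_eq_exp_ℝ]
    exact (NormedSpace.expSeries_div_hasSum_exp (t * x)).div_const _
  have hle := ite_pow_div_factorial_le (U := U) hx ht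
  have hnonneg : ∀ d : ℕ, 0 ≤ (if U ≤ (d : ℝ) then x ^ d / d ! else 0) := fun d ↦ by
    split_ifs <;> positivity
  exact hasSum_le hle (hexp.summable.of_nonneg_of_le hnonneg hle).hasSum hexp

theorem exp_series_tail_bound (ξ U : ℝ) (hξ : 0 < ξ) (hU : ξ ≤ U) :
    ∑' d : ℕ, (if U ≤ (d : ℝ) then ξ ^ d / (Nat.factorial d) else 0)
      ≤ (Real.exp 1 * ξ / U) ^ U := by
  have hU0 : 0 < U := hξ.trans_le hU
  have ht : 1 ≤ U / ξ := (one_le_div hξ).2 hU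
  calc _ ≤ exp (U / ξ * ξ) / (U / ξ) ^ U := tsum_ite_pow_div_factorial_le hξ.le ht
    _ = (exp 1 * ξ / U) ^ U := by
      rw [div_mul_cancel₀ U hξ.ne', ← exp_one_rpow U, ← div_rpow (exp_pos 1).le (by positivity)]
      congr 1
      field_simp
end

section
/- Let q ≥ 2, 0 < c < 1, c' ≥ 0, α > 0, and α_j = α (log j)^{c'}/j^c for j ≥ j₀ with 0 < α_j < 1 for all j. For N large with n = ⌊log_q N⌋, suppose λ_N is any sum of the form Σ_{i=1}^{M} α_{a_i} α_{ã_i} where M = (q^{n+1}-1)/2, the a_i are distinct elements of [0, q^{n+1}), the ã_i are distinct elements of [q^n, q^{n+1}), and {a_i} ∪ {ã_i} covers all but at most one element of [0, q^{n+1}). Then there exist positive constants D₁, D₂ depending only on c, c', q, α such that D₁ (log N)^{2c'} q^{n(1-2c)} < λ_N < D₂ (log N)^{2c'} q^{n(1-2c)} for all sufficiently large N. -/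
/-!
Write `n = ⌊log_q N⌋`, so that `log N ≍ n` and every `ã_i ∈ [q^n, q^{n+1})` has
`α_{ã_i} ≍ n^{c'} q^{-nc}`.

Upper bound: by injectivity, `∑ α_{a_i} α_{ã_i} ≤ max α_{ã_i} · ∑_{j < q^{n+1}} α_j`, and splitting
`[1, q^{n+1})` into the blocks `[q^k, q^{k+1})` (Schlömilch condensation) gives
`∑_{j < q^{n+1}} j^{-c} = O(q^{n(1-c)})`.

Lower bound: no `ã_i` lies in `[q^{n-1}, q^n)`, so by the covering hypothesis all but at most one
element of this block is some `a_i`. This gives `≫ q^{n-1}` terms, each `≫ n^{2c'} q^{-2nc}`.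
-/

open Finset Real Function

lemma mul_log_rpow_div_rpow_le {α c c' x t y : ℝ} (hα : 0 ≤ α) (hc : 0 ≤ c) (hc' : 0 ≤ c')
    (hx : 1 ≤ x) (hxt : x ≤ t) (hty : t ≤ y) :
    α * log t ^ c' / t ^ c ≤ α * log y ^ c' / x ^ c := by
  have hlog := log_nonneg (hx.trans hxt)
  have := mul_nonneg hα (rpow_nonneg (hlog.trans (log_le_log (by linarith) hty)) c')
  gcongr
  linarith

lemma le_mul_log_rpow_div_rpow {α c c' x t y : ℝ} (hα : 0 ≤ α) (hc : 0 ≤ c) (hc' : 0 ≤ c')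
    (hx : 1 ≤ x) (hxt : x ≤ t) (hty : t ≤ y) :
    α * log x ^ c' / y ^ c ≤ α * log t ^ c' / t ^ c := by
  have hlog := log_nonneg hx
  have := mul_nonneg hα (rpow_nonneg (hlog.trans (log_le_log (by linarith) hxt)) c')
  have : 0 < t := by linarith
  gcongr

lemma rpow_mul_self_eq_rpow_two_mul {x : ℝ} (hx : 0 < x) (y : ℝ) : x ^ y * x ^ y = x ^ (2 * y) := by
  rw [← rpow_add hx, two_mul]

lemma natLog_mul_log_le_log_lt {q N : ℕ} (hq : 1 < q) (hN : N ≠ 0) :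
    Nat.log q N * log q ≤ log N ∧ log N < (Nat.log q N + 1) * log q := by
  have hN' : (0 : ℝ) < N := by exact_mod_cast Nat.pos_of_ne_zero hN
  constructor
  · rw [← log_pow]
    exact log_le_log (by positivity) (by exact_mod_cast Nat.pow_log_le_self q hN)
  · rw [← Nat.cast_succ, ← log_pow]
    exact log_lt_log hN' (by exact_mod_cast Nat.lt_pow_succ_log_self hq N)

lemma log_pow_natLog_succ_le_two_mul_log {q N : ℕ} (hq : 1 < q) (hN : q ≤ N) :
    log ((q : ℝ) ^ (Nat.log q N + 1)) ≤ 2 * log N := by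
  have hn : (1 : ℝ) ≤ Nat.log q N := by exact_mod_cast Nat.le_log_of_pow_le hq (by simpa using hN)
  have hL : 0 < log (q : ℝ) := log_pos (by exact_mod_cast hq)
  have := (natLog_mul_log_le_log_lt (N := N) hq (by omega)).1
  rw [log_pow]
  push_cast
  nlinarith

lemma log_le_three_mul_log_pow_natLog_sub_one {q N : ℕ} (hq : 1 < q) (hN : q ^ 2 ≤ N) :
    log N ≤ 3 * log ((q : ℝ) ^ (Nat.log q N - 1)) := by
  have hn : 2 ≤ Nat.log q N := Nat.le_log_of_pow_le hq hN
  have hn' : (2 : ℝ) ≤ Nat.log q N := by exact_mod_cast hn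
  have hL : 0 < log (q : ℝ) := log_pos (by exact_mod_cast hq)
  have := (natLog_mul_log_le_log_lt (N := N) hq (by have := Nat.one_lt_pow two_ne_zero hq; omega)).2
  rw [log_pow, Nat.cast_sub (by omega)]
  push_cast
  nlinarith

lemma rpow_natCast_mul_one_sub_two_mul {x : ℝ} (hx : 0 < x) (n : ℕ) (c : ℝ) :
    x ^ ((n : ℝ) * (1 - 2 * c)) = (x ^ n) ^ (1 - c) / (x ^ n) ^ c := by
  rw [← rpow_sub (by positivity), rpow_natCast_mul hx.le]
  ring_nf

lemma sum_range_pow_rpow_neg_le {q : ℕ} {c : ℝ} (hq : 1 < q) (hc0 : 0 < c) (hc1 : c < 1)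
    (n : ℕ) :
    ∑ k ∈ range (q ^ n), (k : ℝ) ^ (-c) ≤
      (q - 1) / ((q : ℝ) ^ (1 - c) - 1) * ((q : ℝ) ^ n) ^ (1 - c) := by
  have hQ : (1 : ℝ) < q := by exact_mod_cast hq
  set r := (q : ℝ) ^ (1 - c)
  have hr : 1 < r := one_lt_rpow hQ (by linarith)
  have hanti : ∀ ⦃m k : ℕ⦄, 0 < m → m ≤ k → (k : ℝ) ^ (-c) ≤ (m : ℝ) ^ (-c) :=
    fun m k hm hmk => rpow_le_rpow_of_nonpos (by exact_mod_cast hm) (by exact_mod_cast hmk)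
      (by linarith)
  have hblock : ∀ k : ℕ, (q ^ (k + 1) - q ^ k) • ((q ^ k : ℕ) : ℝ) ^ (-c) = (q - 1) * r ^ k := by
    intro k
    have hQk : (0 : ℝ) < (q : ℝ) ^ k := by positivity
    rw [nsmul_eq_mul, Nat.cast_sub (Nat.pow_le_pow_right (by omega) k.le_succ),
      rpow_pow_comm (by positivity), sub_eq_add_neg (1 : ℝ), rpow_add hQk, rpow_one]
    push_cast
    rw [pow_succ]
    ring
  calc ∑ k ∈ range (q ^ n), (k : ℝ) ^ (-c)
      ≤ ∑ k ∈ range (q ^ 0), (k : ℝ) ^ (-c) +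
          ∑ k ∈ range n, (q ^ (k + 1) - q ^ k) • ((q ^ k : ℕ) : ℝ) ^ (-c) :=
        le_sum_schlomilch hanti (fun k => pow_pos (by omega) k) (pow_right_mono₀ hq.le) n
    _ = (q - 1) / (r - 1) * (r ^ n - 1) := by
      -- the `k = 0` term vanishes because `(0 : ℝ) ^ (-c) = 0` in Mathlib
      rw [pow_zero, sum_range_one, Nat.cast_zero, zero_rpow (neg_ne_zero.mpr hc0.ne'), zero_add,
        sum_congr rfl fun k _ => hblock k, ← mul_sum, geom_sum_eq hr.ne']
      ring
    _ ≤ (q - 1) / (r - 1) * r ^ n := by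
      have : 0 ≤ (q - 1) / (r - 1) := div_nonneg (by linarith) (by linarith)
      gcongr
      linarith
    _ = _ := by rw [rpow_pow_comm (by positivity)]

lemma card_Ico_le_card_filter_add_one {ι : Type*} [Fintype ι] {a b : ι → ℕ} {lo hi B : ℕ}
    (hhi : hi ≤ B) (hb : ∀ i, hi ≤ b i)
    (hcover : ({m : ℕ | m < B} \ (Set.range a ∪ Set.range b)).Subsingleton) :
    hi - lo ≤ #{i | a i ∈ Ico lo hi} + 1 := by
  classical
  have hmissed : #{m ∈ Ico lo hi | m ∉ Set.range a} ≤ 1 := by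
    refine card_le_one.mpr fun x hx y hy => hcover ?_ ?_ <;>
    · simp only [mem_filter, mem_Ico] at hx hy
      simp only [Set.mem_sdiff, Set.mem_ofPred_eq, Set.mem_union, Set.mem_range, not_or,
        not_exists]
      refine ⟨by omega, fun i h => by simp_all, fun i h => ?_⟩
      have := hb i
      omega
  have hhit : #{m ∈ Ico lo hi | m ∈ Set.range a} ≤ #{i | a i ∈ Ico lo hi} := by
    refine le_trans (card_le_card fun m hm => ?_) (card_image_le (f := a))
    simp only [mem_filter, Set.mem_range] at hm
    obtain ⟨hm, i, rfl⟩ := hm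
    exact mem_image_of_mem a (by simpa using hm)
  calc hi - lo = #(Ico lo hi) := (Nat.card_Ico _ _).symm
    _ = #{m ∈ Ico lo hi | m ∈ Set.range a} + #{m ∈ Ico lo hi | m ∉ Set.range a} :=
      (card_filter_add_card_filter_not _).symm
    _ ≤ _ := add_le_add hhit hmissed

lemma sum_mul_le_mul_sum_range {ι : Type*} [Fintype ι] {f g : ℕ → ℝ} {a b : ι → ℕ} {B : ℕ}
    {β : ℝ} (hf : ∀ j, 0 ≤ f j) (hβ : 0 ≤ β) (ha : Injective a) (haB : ∀ i, a i < B)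
    (hg : ∀ i, g (b i) ≤ β) :
    ∑ i, f (a i) * g (b i) ≤ β * ∑ j ∈ range B, f j := by
  calc ∑ i, f (a i) * g (b i) ≤ ∑ i, f (a i) * β := by gcongr with i; exacts [hf _, hg i]
    _ = β * ∑ j ∈ univ.map ⟨a, ha⟩, f j := by rw [sum_map, ← sum_mul, mul_comm]; rfl
    _ ≤ β * ∑ j ∈ range B, f j := by
      gcongr
      · exact fun j _ _ => hf j
      · intro j hj
        obtain ⟨i, -, rfl⟩ := mem_map.mp hj
        exact mem_range.mpr (haB i)

section

variable {q j₀ : ℕ} {c c' α : ℝ} {s : ℕ → ℝ}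

lemma sum_range_pow_le_of_eq_log_rpow_div_rpow
    (hq : 1 < q) (hc0 : 0 < c) (hc1 : c < 1) (hc' : 0 ≤ c') (hα : 0 ≤ α)
    (hs1 : ∀ j, s j ≤ 1) (hs : ∀ j, j₀ ≤ j → s j = α * log j ^ c' / (j : ℝ) ^ c) (n : ℕ) :
    ∑ j ∈ range (q ^ n), s j ≤ (j₀ + 1) + α * log ((q : ℝ) ^ n) ^ c' *
      ((q - 1) / ((q : ℝ) ^ (1 - c) - 1) * ((q : ℝ) ^ n) ^ (1 - c)) := by
  have hlog : 0 ≤ log ((q : ℝ) ^ n) := log_nonneg (one_le_pow₀ (by exact_mod_cast hq.le))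
  have hpt : ∀ j ∈ range (q ^ n),
      s j ≤ (if j ≤ j₀ then 1 else 0) + α * log ((q : ℝ) ^ n) ^ c' * (j : ℝ) ^ (-c) := by
    intro j hj
    by_cases hjj₀ : j ≤ j₀
    · rw [if_pos hjj₀]
      have := mul_nonneg (mul_nonneg hα (rpow_nonneg hlog c')) (rpow_nonneg j.cast_nonneg (-c))
      linarith [hs1 j]
    · rw [if_neg hjj₀, zero_add, hs j (by omega), rpow_neg j.cast_nonneg, ← div_eq_mul_inv]
      refine mul_log_rpow_div_rpow_le hα hc0.le hc' ?_ le_rfl ?_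
      · exact_mod_cast (by omega : 1 ≤ j)
      · exact_mod_cast (mem_range.mp hj).le
  have hcard : #{j ∈ range (q ^ n) | j ≤ j₀} ≤ j₀ + 1 :=
    (card_le_card fun j hj => mem_range.mpr (Nat.lt_succ_of_le (mem_filter.mp hj).2)).trans
      (card_range _).le
  calc ∑ j ∈ range (q ^ n), s j
      ≤ ∑ j ∈ range (q ^ n),
          ((if j ≤ j₀ then 1 else 0) + α * log ((q : ℝ) ^ n) ^ c' * (j : ℝ) ^ (-c)) :=
        sum_le_sum hpt
    _ = #{j ∈ range (q ^ n) | j ≤ j₀} +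
          α * log ((q : ℝ) ^ n) ^ c' * ∑ j ∈ range (q ^ n), (j : ℝ) ^ (-c) := by
      rw [sum_add_distrib, sum_boole, mul_sum]
    _ ≤ _ := by
      gcongr
      · exact_mod_cast hcard
      · exact sum_range_pow_rpow_neg_le hq hc0 hc1 n

lemma sum_mul_le_of_mem_Ico_pow_succ {ι : Type*} [Fintype ι]
    (hq : 1 < q) (hc0 : 0 < c) (hc1 : c < 1) (hc' : 0 ≤ c') (hα : 0 ≤ α)
    (hs01 : ∀ j, 0 ≤ s j ∧ s j ≤ 1) (hs : ∀ j, j₀ ≤ j → s j = α * log j ^ c' / (j : ℝ) ^ c)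
    {n : ℕ} (hj₀ : j₀ ≤ q ^ n) {a b : ι → ℕ} (ha : Injective a) (haB : ∀ i, a i < q ^ (n + 1))
    (hb : ∀ i, q ^ n ≤ b i ∧ b i < q ^ (n + 1)) :
    ∑ i, s (a i) * s (b i) ≤ α * log ((q : ℝ) ^ (n + 1)) ^ c' / ((q : ℝ) ^ n) ^ c *
      ((j₀ + 1) + α * log ((q : ℝ) ^ (n + 1)) ^ c' *
        ((q - 1) / ((q : ℝ) ^ (1 - c) - 1) * ((q : ℝ) ^ (n + 1)) ^ (1 - c))) := by
  have hQ : (1 : ℝ) ≤ q := by exact_mod_cast hq.le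
  have hsb : ∀ i, s (b i) ≤ α * log ((q : ℝ) ^ (n + 1)) ^ c' / ((q : ℝ) ^ n) ^ c := by
    intro i
    rw [hs _ (hj₀.trans (hb i).1)]
    exact mul_log_rpow_div_rpow_le hα hc0.le hc' (one_le_pow₀ hQ) (by exact_mod_cast (hb i).1)
      (by exact_mod_cast (hb i).2.le)
  have hβ : 0 ≤ α * log ((q : ℝ) ^ (n + 1)) ^ c' / ((q : ℝ) ^ n) ^ c :=
    div_nonneg (mul_nonneg hα (rpow_nonneg (log_nonneg (one_le_pow₀ hQ)) _)) (by positivity)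
  refine (sum_mul_le_mul_sum_range (fun j => (hs01 j).1) hβ ha haB hsb).trans ?_
  gcongr
  exact sum_range_pow_le_of_eq_log_rpow_div_rpow hq hc0 hc1 hc' hα (fun j => (hs01 j).2) hs _

lemma le_sum_mul_of_subsingleton_uncovered {ι : Type*} [Fintype ι]
    (hq : 1 < q) (hc : 0 ≤ c) (hc' : 0 ≤ c') (hα : 0 ≤ α)
    (hs0 : ∀ j, 0 ≤ s j) (hs : ∀ j, j₀ ≤ j → s j = α * log j ^ c' / (j : ℝ) ^ c)
    {m : ℕ} (hm : 2 ≤ q ^ m) (hj₀ : j₀ ≤ q ^ m) {a b : ι → ℕ}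
    (hb : ∀ i, q ^ (m + 1) ≤ b i ∧ b i < q ^ (m + 2))
    (hcover : ({x : ℕ | x < q ^ (m + 2)} \ (Set.range a ∪ Set.range b)).Subsingleton) :
    (q : ℝ) ^ m / 2 * (α * log ((q : ℝ) ^ m) ^ c' / ((q : ℝ) ^ (m + 1)) ^ c *
      (α * log ((q : ℝ) ^ (m + 1)) ^ c' / ((q : ℝ) ^ (m + 2)) ^ c)) ≤ ∑ i, s (a i) * s (b i) := by
  classical
  have hQ : (1 : ℝ) ≤ q := by exact_mod_cast hq.le
  have hlog : ∀ k : ℕ, 0 ≤ α * log ((q : ℝ) ^ k) ^ c' :=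
    fun k => mul_nonneg hα (rpow_nonneg (log_nonneg (one_le_pow₀ hQ)) _)
  set P : Finset ι := {i | a i ∈ Ico (q ^ m) (q ^ (m + 1))}
  have hcard : q ^ (m + 1) - q ^ m ≤ #P + 1 :=
    card_Ico_le_card_filter_add_one (Nat.pow_le_pow_right (by omega) (by omega))
      (fun i => (hb i).1) hcover
  have hterm : ∀ i ∈ P, α * log ((q : ℝ) ^ m) ^ c' / ((q : ℝ) ^ (m + 1)) ^ c *
      (α * log ((q : ℝ) ^ (m + 1)) ^ c' / ((q : ℝ) ^ (m + 2)) ^ c) ≤ s (a i) * s (b i) := by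
    intro i hi
    obtain ⟨hlo, hhi⟩ := mem_Ico.mp (mem_filter.mp hi).2
    have hjb : j₀ ≤ b i := hj₀.trans ((Nat.pow_le_pow_right (by omega) (by omega)).trans (hb i).1)
    refine mul_le_mul ?_ ?_ (div_nonneg (hlog _) (by positivity)) (hs0 _)
    · rw [hs _ (hj₀.trans hlo)]
      exact le_mul_log_rpow_div_rpow hα hc hc' (one_le_pow₀ hQ) (by exact_mod_cast hlo)
        (by exact_mod_cast hhi.le)
    · rw [hs _ hjb]
      exact le_mul_log_rpow_div_rpow hα hc hc' (one_le_pow₀ hQ) (by exact_mod_cast (hb i).1)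
        (by exact_mod_cast (hb i).2.le)
  calc _ ≤ (#P : ℝ) * (α * log ((q : ℝ) ^ m) ^ c' / ((q : ℝ) ^ (m + 1)) ^ c *
      (α * log ((q : ℝ) ^ (m + 1)) ^ c' / ((q : ℝ) ^ (m + 2)) ^ c)) := by
        refine mul_le_mul_of_nonneg_right ?_ (mul_nonneg (div_nonneg (hlog m) (by positivity))
          (div_nonneg (hlog (m + 1)) (by positivity)))
        have : 2 * q ^ m ≤ q ^ (m + 1) := by rw [pow_succ']; exact Nat.mul_le_mul_right _ hq
        rw [div_le_iff₀ two_pos]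
        exact_mod_cast (by omega : q ^ m ≤ #P * 2)
    _ ≤ ∑ i ∈ P, s (a i) * s (b i) := by
      rw [← nsmul_eq_mul]
      exact card_nsmul_le_sum P _ _ hterm
    _ ≤ ∑ i, s (a i) * s (b i) :=
      sum_le_sum_of_subset_of_nonneg (subset_univ P) fun i _ _ => mul_nonneg (hs0 _) (hs0 _)

theorem exists_forall_sum_mul_lt
    (hq : 1 < q) (hc0 : 0 < c) (hc1 : c < 1) (hc' : 0 ≤ c') (hα : 0 < α)
    (hs01 : ∀ j, 0 ≤ s j ∧ s j ≤ 1) (hs : ∀ j, j₀ ≤ j → s j = α * log j ^ c' / (j : ℝ) ^ c) :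
    ∃ D > 0, ∀ N : ℕ, q ^ (j₀ + 1) ≤ N → ∀ {ι : Type} [Fintype ι] (a b : ι → ℕ), Injective a →
      (∀ i, a i < q ^ (Nat.log q N + 1)) →
      (∀ i, q ^ Nat.log q N ≤ b i ∧ b i < q ^ (Nat.log q N + 1)) →
      ∑ i, s (a i) * s (b i) <
        D * log N ^ (2 * c') * (q : ℝ) ^ ((Nat.log q N : ℝ) * (1 - 2 * c)) := by
  have hQ : (1 : ℝ) < q := by exact_mod_cast hq
  set C := (q - 1) / ((q : ℝ) ^ (1 - c) - 1) * (q : ℝ) ^ (1 - c) with hC_def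
  have hC : 0 ≤ C := mul_nonneg (div_nonneg (by linarith)
    (by linarith [one_lt_rpow hQ (by linarith : 0 < 1 - c)])) (by positivity)
  refine ⟨2 * α * 2 ^ (2 * c') * (j₀ + 1 + α * C), by positivity, ?_⟩
  intro N hN ι _ a b ha haB hb
  have hqN : q ≤ N := (Nat.le_self_pow (by omega) q).trans hN
  have hj₀ : j₀ ≤ q ^ Nat.log q N := (Nat.lt_pow_self hq).le.trans
    (Nat.pow_le_pow_right (by omega) (Nat.le_log_of_pow_le hq hN)) |>.trans' (by omega)
  have hsum := sum_mul_le_of_mem_Ico_pow_succ hq hc0 hc1 hc' hα.le hs01 hs hj₀ ha haB hb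
  have hX := log_pow_natLog_succ_le_two_mul_log hq hqN
  have hG : 1 ≤ 2 * log N := by
    linarith [log_two_gt_d9, log_le_log two_pos (by exact_mod_cast hq.trans_le hqN : (2 : ℝ) ≤ N)]
  generalize Nat.log q N = n at *
  set Q := (q : ℝ) ^ n
  set Y := (2 * log N) ^ c'
  have hXY : log ((q : ℝ) ^ (n + 1)) ^ c' ≤ Y :=
    rpow_le_rpow (log_nonneg (one_le_pow₀ hQ.le)) hX hc'
  have hYW : 1 ≤ Y * Q ^ (1 - c) := one_le_mul_of_one_le_of_one_le (one_le_rpow hG hc')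
    (one_le_rpow (one_le_pow₀ hQ.le) (by linarith))
  have hqn1 : ((q : ℝ) ^ (n + 1)) ^ (1 - c) = (q : ℝ) ^ (1 - c) * Q ^ (1 - c) := by
    rw [pow_succ, mul_rpow (by positivity) (by positivity), mul_comm]
  calc ∑ i, s (a i) * s (b i)
      ≤ α * log ((q : ℝ) ^ (n + 1)) ^ c' / Q ^ c *
          (j₀ + 1 + α * log ((q : ℝ) ^ (n + 1)) ^ c' * (C * Q ^ (1 - c))) :=
        hsum.trans_eq (by rw [hqn1, hC_def]; ring)
    _ ≤ α * Y / Q ^ c * (j₀ + 1 + α * Y * (C * Q ^ (1 - c))) := by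
      have := log_nonneg (one_le_pow₀ (n := n + 1) hQ.le)
      gcongr
    _ < α * Y / Q ^ c * (2 * (j₀ + 1 + α * C) * (Y * Q ^ (1 - c))) := by
      gcongr
      nlinarith [mul_nonneg (mul_nonneg hα.le hC) (by linarith : (0 : ℝ) ≤ Y * Q ^ (1 - c))]
    _ = 2 * α * ((2 * log N) ^ c' * (2 * log N) ^ c') * (j₀ + 1 + α * C) *
          (Q ^ (1 - c) / Q ^ c) := by ring
    _ = _ := by
      rw [rpow_mul_self_eq_rpow_two_mul (by linarith), mul_rpow (by norm_num) (by linarith),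
        rpow_natCast_mul_one_sub_two_mul (by positivity)]
      ring

theorem exists_forall_lt_sum_mul
    (hq : 1 < q) (hc : 0 ≤ c) (hc' : 0 ≤ c') (hα : 0 < α)
    (hs0 : ∀ j, 0 ≤ s j) (hs : ∀ j, j₀ ≤ j → s j = α * log j ^ c' / (j : ℝ) ^ c) :
    ∃ D > 0, ∀ N : ℕ, q ^ (j₀ + 2) ≤ N → ∀ {ι : Type} [Fintype ι] (a b : ι → ℕ),
      (∀ i, q ^ Nat.log q N ≤ b i ∧ b i < q ^ (Nat.log q N + 1)) →
      ({x : ℕ | x < q ^ (Nat.log q N + 1)} \ (Set.range a ∪ Set.range b)).Subsingleton →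
      D * log N ^ (2 * c') * (q : ℝ) ^ ((Nat.log q N : ℝ) * (1 - 2 * c)) <
        ∑ i, s (a i) * s (b i) := by
  have hQ : (1 : ℝ) < q := by exact_mod_cast hq
  refine ⟨α ^ 2 / (4 * 3 ^ (2 * c') * q * q ^ c), by positivity, ?_⟩
  intro N hN ι _ a b hb hcover
  have hn : j₀ + 2 ≤ Nat.log q N := Nat.le_log_of_pow_le hq hN
  have hGm := log_le_three_mul_log_pow_natLog_sub_one hq
    ((Nat.pow_le_pow_right (by omega) (by omega)).trans hN)
  have hG0 : 0 < log (N : ℝ) :=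
    log_pos (by exact_mod_cast (Nat.one_lt_pow (by omega) hq).trans_le hN)
  generalize Nat.log q N = n at *
  obtain ⟨m, rfl⟩ : ∃ m, n = m + 1 := ⟨n - 1, by omega⟩
  rw [Nat.add_sub_cancel] at hGm
  have hqm : j₀ + 2 ≤ q ^ m :=
    (Nat.lt_pow_self hq).trans_le (Nat.pow_le_pow_right (by omega) (by omega))
  have hsum := le_sum_mul_of_subsingleton_uncovered hq hc hc' hα.le hs0 hs
    (by omega : 2 ≤ q ^ m) (by omega : j₀ ≤ q ^ m) hb hcover
  set Q := (q : ℝ) ^ (m + 1)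
  set Z := (log N / 3) ^ c'
  have hZm : Z ≤ log ((q : ℝ) ^ m) ^ c' := rpow_le_rpow (by positivity) (by linarith) hc'
  have hZm1 : Z ≤ log Q ^ c' := hZm.trans (rpow_le_rpow (by linarith)
    (log_le_log (by positivity) (pow_le_pow_right₀ hQ.le m.le_succ)) hc')
  have hqm_eq : (q : ℝ) ^ m = Q / q := by rw [eq_div_iff (by positivity), ← pow_succ]
  have hqm2 : ((q : ℝ) ^ (m + 2)) ^ c = q ^ c * Q ^ c := by
    rw [pow_succ, mul_rpow (by positivity) (by positivity), mul_comm]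
  have hQn : (q : ℝ) ^ (((m + 1 : ℕ) : ℝ) * (1 - 2 * c)) = Q / (Q ^ c * Q ^ c) := by
    rw [rpow_natCast_mul_one_sub_two_mul (by positivity), rpow_sub (by positivity), rpow_one,
      div_div]
  have hGZ : log N ^ (2 * c') = 3 ^ (2 * c') * (Z * Z) := by
    rw [rpow_mul_self_eq_rpow_two_mul (by positivity), div_rpow hG0.le (by norm_num),
      mul_div_cancel₀ _ (by positivity)]
  calc α ^ 2 / (4 * 3 ^ (2 * c') * q * q ^ c) * log N ^ (2 * c') *
        (q : ℝ) ^ (((m + 1 : ℕ) : ℝ) * (1 - 2 * c))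
      = (q : ℝ) ^ m / 2 * (α * Z / Q ^ c * (α * Z / (q ^ c * Q ^ c))) / 2 := by
        rw [hGZ, hQn, hqm_eq]
        field_simp
        ring
    _ < (q : ℝ) ^ m / 2 * (α * Z / Q ^ c * (α * Z / (q ^ c * Q ^ c))) :=
      half_lt_self (by positivity)
    _ ≤ (q : ℝ) ^ m / 2 *
          (α * log ((q : ℝ) ^ m) ^ c' / Q ^ c * (α * log Q ^ c' / (q ^ c * Q ^ c))) := by
      have : 0 ≤ log ((q : ℝ) ^ m) := by linarith
      gcongr
    _ ≤ ∑ i, s (a i) * s (b i) := by rwa [hqm2] at hsum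

end

theorem lambda_two_sided_estimate (q : ℕ) (hq : 2 ≤ q) (c c' α : ℝ)
    (hc0 : 0 < c) (hc1 : c < 1) (hc' : 0 ≤ c') (hα : 0 < α)
    (j₀ : ℕ) (αseq : ℕ → ℝ)
    (hα01 : ∀ j, 0 < αseq j ∧ αseq j < 1)
    (hαf : ∀ j : ℕ, j₀ ≤ j → αseq j = α * (Real.log j) ^ c' / (j : ℝ) ^ c) :
    ∃ D₁ D₂ : ℝ, 0 < D₁ ∧ 0 < D₂ ∧ ∃ N₀ : ℕ, ∀ N : ℕ, N₀ ≤ N →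
      ∀ (a a2 : Fin ((q ^ (Nat.log q N + 1) - 1) / 2) → ℕ),
        Function.Injective a → Function.Injective a2 →
        (∀ i, a i < q ^ (Nat.log q N + 1)) →
        (∀ i, q ^ (Nat.log q N) ≤ a2 i ∧ a2 i < q ^ (Nat.log q N + 1)) →
        (∀ i j, a i ≠ a2 j) →
        ({m : ℕ | m < q ^ (Nat.log q N + 1)} \ (Set.range a ∪ Set.range a2)).Subsingleton →
        D₁ * (Real.log N) ^ (2 * c') * (q : ℝ) ^ ((Nat.log q N : ℝ) * (1 - 2 * c))
            < ∑ i, αseq (a i) * αseq (a2 i) ∧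
        ∑ i, αseq (a i) * αseq (a2 i)
            < D₂ * (Real.log N) ^ (2 * c') * (q : ℝ) ^ ((Nat.log q N : ℝ) * (1 - 2 * c)) := by
  have hq1 : 1 < q := by omega
  obtain ⟨D₁, hD₁, hlower⟩ :=
    exists_forall_lt_sum_mul hq1 hc0.le hc' hα (fun j => (hα01 j).1.le) hαf
  obtain ⟨D₂, hD₂, hupper⟩ :=
    exists_forall_sum_mul_lt hq1 hc0 hc1 hc' hα (fun j => ⟨(hα01 j).1.le, (hα01 j).2.le⟩) hαf
  refine ⟨D₁, D₂, hD₁, hD₂, q ^ (j₀ + 2), fun N hN a a2 ha _ haB ha2B _ hcover =>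
    ⟨hlower N hN a a2 ha2B hcover, hupper N ?_ a a2 ha haB ha2B⟩⟩
  exact (Nat.pow_le_pow_right (by omega) (by omega)).trans hN
end
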